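/- For any two probability measures P and Q on a finite type, and any real-valued function T, the expectation of T under P minus the logarithm of the expectation of exp(T) under Q is at most the Kullback-Leibler divergence KL(P || Q). That is, E_P[T] - log E_Q[exp(T)] <= KL(P || Q). -/

import Mathlib

/-!
Writing `P x * log (P x / Q x) = P x * T x - P x * log (Q x * exp (T x) / P x)` on the support
of `P`, the bound is Jensen's inequality for the concave `log` with weights `P`:
`∑ P x * log (Q x * exp (T x) / P x) ≤ log (∑ Q x * exp (T x))`.
-/

open Finset Real

theorem Real.sum_mul_log_div_le_log_sum {ι : Type*} (s : Finset ι) (w y : ι → ℝ)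
    (hw0 : ∀ i ∈ s, 0 ≤ w i) (hw1 : ∑ i ∈ s, w i = 1) (hy0 : ∀ i ∈ s, 0 ≤ y i)
    (hy : ∀ i ∈ s, w i ≠ 0 → 0 < y i) :
    ∑ i ∈ s, w i * log (y i / w i) ≤ log (∑ i ∈ s, y i) := by
  classical
  set t := s.filter (fun i => w i ≠ 0)
  have hwt : ∀ i ∈ t, 0 < w i := fun i hi =>
    (hw0 i (mem_filter.1 hi).1).lt_of_ne' (mem_filter.1 hi).2
  have hyt : ∀ i ∈ t, 0 < y i := fun i hi => hy i (mem_filter.1 hi).1 (mem_filter.1 hi).2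
  have hwt1 : ∑ i ∈ t, w i = 1 := by rw [sum_filter_ne_zero, hw1]
  have hyt_pos : 0 < ∑ i ∈ t, y i := by
    obtain ⟨i, hi⟩ : t.Nonempty := nonempty_of_sum_ne_zero (by rw [hwt1]; exact one_ne_zero)
    exact sum_pos' (fun j hj => (hyt j hj).le) ⟨i, hi, hyt i hi⟩
  calc ∑ i ∈ s, w i * log (y i / w i)
      = ∑ i ∈ t, w i • log (y i / w i) := by
        rw [sum_filter_of_ne (fun i _ h => left_ne_zero_of_mul h)]; rfl
    _ ≤ log (∑ i ∈ t, w i • (y i / w i)) :=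
        strictConcaveOn_log_Ioi.concaveOn.le_map_sum (fun i hi => (hwt i hi).le) hwt1
          (fun i hi => div_pos (hyt i hi) (hwt i hi))
    _ = log (∑ i ∈ t, y i) := by
        congr 1
        exact sum_congr rfl fun i hi => mul_div_cancel₀ _ (hwt i hi).ne'
    _ ≤ log (∑ i ∈ s, y i) :=
        log_le_log hyt_pos (sum_le_sum_of_subset_of_nonneg (filter_subset _ s)
          fun i hi _ => hy0 i hi)

theorem stmt_2_general {α : Type*} [Fintype α] (P Q : α → ℝ)
    (hP0 : ∀ x, 0 ≤ P x) (hP1 : ∑ x, P x = 1)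
    (hQ0 : ∀ x, 0 ≤ Q x)
    (hac : ∀ x, Q x = 0 → P x = 0)
    (T : α → ℝ) :
    (∑ x, P x * T x) - Real.log (∑ x, Q x * Real.exp (T x)) ≤
      ∑ x, P x * Real.log (P x / Q x) := by
  have hQ_pos : ∀ x, P x ≠ 0 → 0 < Q x := fun x hP =>
    (hQ0 x).lt_of_ne' fun hQ => hP (hac x hQ)
  have hterm : ∀ x, P x * log (P x / Q x) =
      P x * T x - P x * log (Q x * exp (T x) / P x) := by
    intro x
    rcases eq_or_ne (P x) 0 with hP | hP
    · simp [hP]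
    have hQ := hQ_pos x hP
    rw [log_div hP hQ.ne', log_div (by positivity) hP, log_mul hQ.ne' (exp_ne_zero _), log_exp]
    ring
  have hjensen := sum_mul_log_div_le_log_sum univ P (fun x => Q x * exp (T x))
    (fun x _ => hP0 x) hP1 (fun x _ => by have := hQ0 x; positivity)
    (fun x _ hP => mul_pos (hQ_pos x hP) (exp_pos _))
  rw [sum_congr rfl fun x _ => hterm x, sum_sub_distrib]
  linarith

/-- Donsker–Varadhan lower bound (MINE, Eq. 3): for probability mass functions
`P`, `Q` on a finite type with `P ≪ Q`, and any function `T`,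
`E_P[T] - log E_Q[exp T] ≤ KL(P ‖ Q)` where
`KL(P ‖ Q) = ∑ x, P x * log (P x / Q x)`. -/
theorem stmt_2 {α : Type*} [Fintype α] (P Q : α → ℝ)
    (hP0 : ∀ x, 0 ≤ P x) (hP1 : ∑ x, P x = 1)
    (hQ0 : ∀ x, 0 ≤ Q x) (hQ1 : ∑ x, Q x = 1)
    (hac : ∀ x, Q x = 0 → P x = 0)
    (T : α → ℝ) :
    (∑ x, P x * T x) - Real.log (∑ x, Q x * Real.exp (T x)) ≤
      ∑ x, P x * Real.log (P x / Q x) :=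
  stmt_2_general P Q hP0 hP1 hQ0 hac T
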